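/- arXiv:1410.0795 — 6 statements merged into one kernel-verified Lean document; each statement's English description precedes it below -/
import Mathlib

section
/- If L = ⊕_{i=1}^r I_i e_i ⊊ F is a squarefree lexicographic submodule and μ_i = max{deg(u e_i) : u e_i in the minimal generating set of I_i e_i}, then μ_i - f_i ≤ indeg(I_{i+1}) + f_{i+1} - f_i for i = 1,...,r-1, and μ_1 ≤ μ_2 ≤ ... ≤ μ_r. -/
/-! If `[x_1,…,x_n]^d ⊆ I`, a minimal generator of `I` has degree at most `d`: otherwise any
`d`-subset of its support would give a proper divisor lying in `I`. Applied to
`d = indeg I_{i+1} + f_{i+1} - f_i` this is the first claim, and since `indeg I_{i+1}` is at most the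
degree of any generator of `I_{i+1}`, it yields `μ_i ≤ μ_{i+1}`. -/

open scoped Classical

noncomputable section

/-- The squarefree monomial `∏_{i ∈ A} x_i` of `S = K[x_1,…,x_n]`,
encoded by its support `A ⊆ {1,…,n}`. -/
def sqMon (K : Type*) [Field K] {n : ℕ} (A : Finset (Fin n)) : MvPolynomial (Fin n) K :=
  ∏ i ∈ A, MvPolynomial.X i

/-- `[x_1,…,x_n]^d`: the ideal generated by all squarefree monomials of degree `d`. -/
def sqPow (K : Type*) [Field K] (n d : ℕ) : Ideal (MvPolynomial (Fin n) K) :=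
  Ideal.span {p | ∃ A : Finset (Fin n), A.card = d ∧ p = sqMon K A}

/-- `I` is a squarefree monomial ideal: generated by squarefree monomials. -/
def IsSqMonIdeal (K : Type*) [Field K] {n : ℕ} (I : Ideal (MvPolynomial (Fin n) K)) : Prop :=
  ∃ G : Set (Finset (Fin n)), I = Ideal.span (sqMon K '' G)

/-- `A` encodes a minimal monomial generator of the squarefree monomial ideal `I`. -/
def IsMinGen (K : Type*) [Field K] {n : ℕ} (I : Ideal (MvPolynomial (Fin n) K))
    (A : Finset (Fin n)) : Prop :=
  sqMon K A ∈ I ∧ ∀ B : Finset (Fin n), B ⊂ A → sqMon K B ∉ I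

/-- `m(u)` : the largest index (1-based) occurring in the squarefree monomial with support `A`. -/
def mIdx {n : ℕ} (A : Finset (Fin n)) : ℕ := A.sup (fun i => i.1 + 1)

/-- Squarefree stable ideal: for every minimal generator `u`,
`x_j u / x_{m(u)} ∈ I` for all `j < m(u)`, `j ∉ supp u`. -/
def IsSqStableIdeal (K : Type*) [Field K] {n : ℕ} (I : Ideal (MvPolynomial (Fin n) K)) : Prop :=
  IsSqMonIdeal K I ∧ ∀ A : Finset (Fin n), IsMinGen K I A →
    ∀ (hA : A.Nonempty) (j : Fin n), j ∉ A → j < A.max' hA →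
      sqMon K (insert j (A.erase (A.max' hA))) ∈ I

/-- Squarefree strongly stable ideal: for every minimal generator `u`,
`x_j u / x_i ∈ I` for all `i ∈ supp u` and `j < i`, `j ∉ supp u`. -/
def IsSqStronglyStableIdeal (K : Type*) [Field K] {n : ℕ}
    (I : Ideal (MvPolynomial (Fin n) K)) : Prop :=
  IsSqMonIdeal K I ∧ ∀ A : Finset (Fin n), IsMinGen K I A →
    ∀ i ∈ A, ∀ j : Fin n, j ∉ A → j < i → sqMon K (insert j (A.erase i)) ∈ I

/-- The squarefree lexicographic order (on supports of equal-degree squarefree monomials):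
`A >_slex B` iff at the first index where they differ, `A` has the smaller index. -/
def slexGT {n : ℕ} (A B : Finset (Fin n)) : Prop :=
  ∃ h : (symmDiff A B).Nonempty, (symmDiff A B).min' h ∈ A

/-- Squarefree lexsegment ideal. -/
def IsSqLexIdeal (K : Type*) [Field K] {n : ℕ} (I : Ideal (MvPolynomial (Fin n) K)) : Prop :=
  IsSqMonIdeal K I ∧ ∀ A B : Finset (Fin n), A.card = B.card →
    sqMon K A ∈ I → slexGT B A → sqMon K B ∈ I

/-- `indeg I`: the least degree of a (squarefree) monomial in `I`. -/
def indeg (K : Type*) [Field K] {n : ℕ} (I : Ideal (MvPolynomial (Fin n) K)) : ℕ :=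
  sInf {d : ℕ | ∃ A : Finset (Fin n), A.card = d ∧ sqMon K A ∈ I}

/-- `G(I)_d`: the minimal generators of `I` in degree `d`, as a finset of supports. -/
def mgens (K : Type*) [Field K] {n : ℕ} (I : Ideal (MvPolynomial (Fin n) K)) (d : ℕ) :
    Finset (Finset (Fin n)) :=
  Finset.univ.filter (fun A => IsMinGen K I A ∧ A.card = d)

/-- Graded Betti numbers `β_{k,k+j}(M)` of `M = ⊕ I_i e_i` (deg `e_i = f i`),
via the Aramova–Herzog–Hibi formula. -/
def betti (K : Type*) [Field K] {n r : ℕ} (I : Fin r → Ideal (MvPolynomial (Fin n) K))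
    (f : Fin r → ℕ) (k j : ℕ) : ℕ :=
  ∑ i : Fin r, ∑ A ∈ mgens K (I i) (j - f i), Nat.choose (mIdx A - A.card) k

/-- Graded Betti numbers `β_{k,k+j}(I)` of a squarefree stable ideal (AHH formula). -/
def bettiI (K : Type*) [Field K] {n : ℕ} (I : Ideal (MvPolynomial (Fin n) K)) (k j : ℕ) : ℕ :=
  ∑ A ∈ mgens K I j, Nat.choose (mIdx A - A.card) k

/-- `β k ℓ` (standing for `β_{k,k+ℓ}`) is an extremal Betti number. -/
def IsExtremal (β : ℕ → ℕ → ℕ) (k ℓ : ℕ) : Prop :=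
  β k ℓ ≠ 0 ∧ ∀ i j : ℕ, k ≤ i → ℓ ≤ j → (i, j) ≠ (k, ℓ) → β i j = 0

/-- Squarefree stable submodule `M = ⊕ I_i e_i ⊊ F` (characterization):
each `I_i` a proper squarefree stable ideal, and
`[x_1,…,x_n]^{f_{i+1}-f_i} I_{i+1} ⊆ I_i`. -/
def IsSqStableSubmodule (K : Type*) [Field K] {n r : ℕ}
    (I : Fin r → Ideal (MvPolynomial (Fin n) K)) (f : Fin r → ℕ) : Prop :=
  (∀ i, I i ≠ ⊤ ∧ IsSqStableIdeal K (I i)) ∧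
  ∀ i : Fin r, ∀ h : i.1 + 1 < r,
    sqPow K n (f ⟨i.1 + 1, h⟩ - f i) * I ⟨i.1 + 1, h⟩ ≤ I i

/-- Squarefree lexicographic submodule (characterization of Proposition `lex`):
each `I_i` a proper squarefree lexsegment ideal, and
`[x_1,…,x_n]^{indeg I_{i+1} + f_{i+1} - f_i} ⊆ I_i`. -/
def IsSqLexSubmodule (K : Type*) [Field K] {n r : ℕ}
    (I : Fin r → Ideal (MvPolynomial (Fin n) K)) (f : Fin r → ℕ) : Prop :=
  (∀ i, IsSqLexIdeal K (I i) ∧ I i ≠ ⊤) ∧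
  ∀ i : Fin r, ∀ h : i.1 + 1 < r,
    sqPow K n (indeg K (I ⟨i.1 + 1, h⟩) + f ⟨i.1 + 1, h⟩ - f i) ≤ I i

end

lemma Fin.monotone_of_le_succ {α : Type*} [Preorder α] {r : ℕ} {g : Fin r → α}
    (h : ∀ (i : Fin r) (hi : i.1 + 1 < r), g i ≤ g ⟨i.1 + 1, hi⟩) : Monotone g := by
  cases r with
  | zero => exact fun i => i.elim0
  | succ m => exact Fin.monotone_iff_le_succ.2 fun i => h i.castSucc (by simp)

section

variable {K : Type*} [Field K] {n : ℕ}

lemma sqMon_mem_sqPow (A : Finset (Fin n)) : sqMon K A ∈ sqPow K n A.card :=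
  Ideal.subset_span ⟨A, rfl, rfl⟩

lemma indeg_le_card {I : Ideal (MvPolynomial (Fin n) K)} {A : Finset (Fin n)}
    (hA : sqMon K A ∈ I) : indeg K I ≤ A.card :=
  Nat.sInf_le ⟨A, rfl, hA⟩

lemma IsMinGen.card_le_of_sqPow_le {I : Ideal (MvPolynomial (Fin n) K)} {A : Finset (Fin n)}
    {d : ℕ} (hA : IsMinGen K I A) (hI : sqPow K n d ≤ I) : A.card ≤ d := by
  by_contra! hd
  obtain ⟨B, hBA, hB⟩ := A.exists_subset_card_eq hd.le
  have hBA' : B ⊂ A := Finset.ssubset_iff_subset_ne.2 ⟨hBA, by rintro rfl; omega⟩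
  exact hA.2 B hBA' (hI (hB ▸ sqMon_mem_sqPow B))

end

/-- for a squarefree lexicographic submodule with
`μ_i = max{deg(u e_i) : u e_i ∈ G(I_i e_i)}`, one has
`μ_i - f_i ≤ indeg I_{i+1} + f_{i+1} - f_i` and `μ_1 ≤ μ_2 ≤ ⋯ ≤ μ_r`. -/
theorem stmt_3 (K : Type*) [Field K] (n r : ℕ)
    (I : Fin r → Ideal (MvPolynomial (Fin n) K)) (f : Fin r → ℕ) (hf : Monotone f)
    (hL : IsSqLexSubmodule K I f)
    (μ : Fin r → ℕ)
    (hμ : ∀ i, IsGreatest {d : ℕ | ∃ A : Finset (Fin n),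
      IsMinGen K (I i) A ∧ A.card + f i = d} (μ i)) :
    (∀ i : Fin r, ∀ h : i.1 + 1 < r,
      μ i - f i ≤ indeg K (I ⟨i.1 + 1, h⟩) + f ⟨i.1 + 1, h⟩ - f i) ∧
    Monotone μ := by
  have hgap : ∀ i : Fin r, ∀ h : i.1 + 1 < r,
      μ i - f i ≤ indeg K (I ⟨i.1 + 1, h⟩) + f ⟨i.1 + 1, h⟩ - f i := by
    intro i h
    obtain ⟨A, hA, hAμ⟩ := (hμ i).1
    have := hA.card_le_of_sqPow_le (hL.2 i h)
    omega
  refine ⟨hgap, Fin.monotone_of_le_succ fun i h => ?_⟩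
  obtain ⟨A, -, hAμ⟩ := (hμ i).1
  obtain ⟨B, hB, hBμ⟩ := (hμ ⟨i.1 + 1, h⟩).1
  have hindeg := indeg_le_card hB.1
  have hfi : f i ≤ f ⟨i.1 + 1, h⟩ := hf (Fin.le_def.2 (Nat.le_succ _))
  have := hgap i h
  omega
end

section
/- Let M = ⊕_{i=1}^r I_i e_i ⊊ F be a squarefree stable submodule. If β_{i,i+j}(M) ≠ 0, then β_{k,k+j}(M) ≠ 0 for all k = 0,...,i. (All linear strands of the Betti table of a squarefree stable submodule begin in homological degree 0.) -/
open scoped Classical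

theorem betti_ne_zero_iff (K : Type*) [Field K] {n r : ℕ}
    (I : Fin r → Ideal (MvPolynomial (Fin n) K)) (f : Fin r → ℕ) (k j : ℕ) :
    betti K I f k j ≠ 0 ↔ ∃ i, ∃ A ∈ mgens K (I i) (j - f i), k ≤ mIdx A - A.card := by
  simp only [betti, ne_eq, Finset.sum_eq_zero_iff, Finset.mem_univ, true_implies,
    Nat.choose_eq_zero_iff, not_forall, not_lt, exists_prop]

theorem stmt_6_general (K : Type*) [Field K] (n r : ℕ)
    (I : Fin r → Ideal (MvPolynomial (Fin n) K)) (f : Fin r → ℕ)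
    (i j : ℕ) (h : betti K I f i j ≠ 0) :
    ∀ k ≤ i, betti K I f k j ≠ 0 := by
  intro k hk
  obtain ⟨i₀, A, hA, hiA⟩ := (betti_ne_zero_iff K I f i j).mp h
  exact (betti_ne_zero_iff K I f k j).mpr ⟨i₀, A, hA, hk.trans hiA⟩

/-- for a squarefree stable submodule, if `β_{i,i+j}(M) ≠ 0` then
`β_{k,k+j}(M) ≠ 0` for all `k = 0,…,i`. -/
theorem stmt_6 (K : Type*) [Field K] (n r : ℕ)
    (I : Fin r → Ideal (MvPolynomial (Fin n) K)) (f : Fin r → ℕ) (hf : Monotone f)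
    (hM : IsSqStableSubmodule K I f) (i j : ℕ) (h : betti K I f i j ≠ 0) :
    ∀ k ≤ i, betti K I f k j ≠ 0 :=
  stmt_6_general K n r I f i j h
end

section
/- Let M = ⊕_{i=1}^r I_i e_i ⊊ F be a squarefree stable submodule. Then β_{k,k+ℓ}(M) is an extremal Betti number of M if and only if (1) β_{k,k+ℓ}(M) ≠ 0, (2) β_{k,k+j}(M) = 0 for all j > ℓ, and (3) β_{i,i+ℓ}(M) = 0 for all i > k. -/
/- In the Aramova–Herzog–Hibi formula every summand of `β_{k,k+j}` is a binomial
coefficient `C(m, k)`, which vanishes exactly when `m < k`; so the vanishing of `β_{k,k+j}`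
propagates to all `β_{i,i+j}` with `i ≥ k`. Hence a nonzero `β_{k,k+ℓ}` with zeros to its right
(`j > ℓ`, `i = k`) and below it (`i > k`, `j = ℓ`) also has zeros at every corner `i > k`, `j > ℓ`. -/

open scoped Classical

theorem isExtremal_iff_of_eq_zero_mono (β : ℕ → ℕ → ℕ)
    (hβ : ∀ i i' j, i ≤ i' → β i j = 0 → β i' j = 0) (k ℓ : ℕ) :
    IsExtremal β k ℓ ↔
      (β k ℓ ≠ 0 ∧ (∀ j, ℓ < j → β k j = 0) ∧ ∀ i, k < i → β i ℓ = 0) := by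
  constructor
  · rintro ⟨hne, hzero⟩
    exact ⟨hne, fun j hj => hzero k j le_rfl hj.le (by simp [hj.ne']),
      fun i hi => hzero i ℓ hi.le le_rfl (by simp [hi.ne'])⟩
  · rintro ⟨hne, hright, hbelow⟩
    refine ⟨hne, fun i j hki hℓj hij => ?_⟩
    rcases hℓj.eq_or_lt with rfl | hℓj
    · exact hbelow i (hki.lt_of_ne fun h => hij (by rw [h]))
    · exact hβ k i j hki (hright j hℓj)

theorem betti_eq_zero_of_le {K : Type*} [Field K] {n r : ℕ}
    {I : Fin r → Ideal (MvPolynomial (Fin n) K)} {f : Fin r → ℕ} {k i j : ℕ} (hki : k ≤ i)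
    (h : betti K I f k j = 0) : betti K I f i j = 0 := by
  simp only [betti, Finset.sum_eq_zero_iff, Finset.mem_univ, true_implies,
    Nat.choose_eq_zero_iff] at h ⊢
  exact fun a A hA => (h a A hA).trans_le hki

theorem stmt_7_general (K : Type*) [Field K] (n r : ℕ)
    (I : Fin r → Ideal (MvPolynomial (Fin n) K)) (f : Fin r → ℕ) (k ℓ : ℕ) :
    IsExtremal (betti K I f) k ℓ ↔
      (betti K I f k ℓ ≠ 0 ∧ (∀ j, ℓ < j → betti K I f k j = 0) ∧
        ∀ i, k < i → betti K I f i ℓ = 0) :=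
  isExtremal_iff_of_eq_zero_mono (betti K I f) (fun _ _ _ => betti_eq_zero_of_le) k ℓ

/-- `β_{k,k+ℓ}(M)` is extremal iff it is nonzero, `β_{k,k+j}(M) = 0` for
`j > ℓ`, and `β_{i,i+ℓ}(M) = 0` for `i > k`. -/
theorem stmt_7 (K : Type*) [Field K] (n r : ℕ)
    (I : Fin r → Ideal (MvPolynomial (Fin n) K)) (f : Fin r → ℕ) (hf : Monotone f)
    (hM : IsSqStableSubmodule K I f) (k ℓ : ℕ) :
    IsExtremal (betti K I f) k ℓ ↔
      (betti K I f k ℓ ≠ 0 ∧ (∀ j, ℓ < j → betti K I f k j = 0) ∧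
        ∀ i, k < i → betti K I f i ℓ = 0) :=
  stmt_7_general K n r I f k ℓ
end

section
/- Let M = ⊕_{i=1}^r I_i e_i ⊊ F be a squarefree stable submodule and β_{k,k+ℓ}(M) an extremal Betti number of M. Then β_{k,k+ℓ}(M) = |{u e_i ∈ G(M)_ℓ : m(u) + f_i = k + ℓ, i = 1,...,r}|. -/
open scoped Classical

/-! If a minimal generator `u e_i` of degree `ℓ` had `m(u) - deg u > k`, its own term in the
Aramova–Herzog–Hibi formula would make `β_{m(u) - deg u, ℓ}` nonzero, against extremality.
Hence every binomial `C(m(u) - deg u, k)` contributing to `β_{k,k+ℓ}` is `0` or `1`, and it is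
`1` exactly when `m(u) - deg u = k`, i.e. `m(u) + f_i = k + ℓ`. -/

lemma card_le_mIdx {n : ℕ} (A : Finset (Fin n)) : A.card ≤ mIdx A := by
  have h : A.image Fin.val ⊆ Finset.range (mIdx A) := by
    intro v hv
    obtain ⟨i, hi, rfl⟩ := Finset.mem_image.mp hv
    have : i.1 + 1 ≤ mIdx A := Finset.le_sup (f := fun i : Fin n => i.1 + 1) hi
    exact Finset.mem_range.mpr (by omega)
  calc A.card = (A.image Fin.val).card :=
        (Finset.card_image_of_injective A Fin.val_injective).symm
    _ ≤ (Finset.range (mIdx A)).card := Finset.card_le_card h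
    _ = mIdx A := Finset.card_range _

lemma IsMinGen.nonempty {K : Type*} [Field K] {n : ℕ} {I : Ideal (MvPolynomial (Fin n) K)}
    {A : Finset (Fin n)} (hA : IsMinGen K I A) (hI : I ≠ ⊤) : A.Nonempty := by
  rw [Finset.nonempty_iff_ne_empty]
  rintro rfl
  exact hI ((Ideal.eq_top_iff_one _).mpr (by simpa [sqMon] using hA.1))

lemma Nat.choose_eq_ite_of_le {a k : ℕ} (h : a ≤ k) : a.choose k = if a = k then 1 else 0 := by
  split_ifs with hak
  · rw [hak, Nat.choose_self]
  · exact Nat.choose_eq_zero_of_lt (lt_of_le_of_ne h hak)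

lemma Set.ncard_setOf_prod_eq_sum {α β : Type*} [Fintype α] [Fintype β] (P : α → β → Prop) :
    {p : α × β | P p.1 p.2}.ncard = ∑ a, (Finset.univ.filter (P a)).card := by
  rw [Set.ncard_eq_toFinset_card', Set.toFinset_ofPred, Finset.card_filter,
    Fintype.sum_prod_type]
  simp only [Finset.card_filter]

section Betti

variable {K : Type*} [Field K] {n r : ℕ} {I : Fin r → Ideal (MvPolynomial (Fin n) K)}
  {f : Fin r → ℕ}

lemma betti_ne_zero_of_mem_mgens {i : Fin r} {A : Finset (Fin n)} {ℓ : ℕ}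
    (hA : A ∈ mgens K (I i) (ℓ - f i)) : betti K I f (mIdx A - A.card) ℓ ≠ 0 := by
  intro h0
  have hi := Finset.sum_eq_zero_iff.mp h0 i (Finset.mem_univ i)
  have hAi := Finset.sum_eq_zero_iff.mp hi A hA
  rw [Nat.choose_self] at hAi
  exact one_ne_zero hAi

lemma IsExtremal.sub_card_le {k ℓ : ℕ} (hext : IsExtremal (betti K I f) k ℓ) {i : Fin r}
    {A : Finset (Fin n)} (hA : A ∈ mgens K (I i) (ℓ - f i)) : mIdx A - A.card ≤ k := by
  by_contra! h
  exact betti_ne_zero_of_mem_mgens hA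
    (hext.2 _ ℓ h.le le_rfl (fun heq => h.ne' (Prod.mk.inj heq).1))

lemma betti_eq_sum_card_filter {k ℓ : ℕ}
    (hk : ∀ i, ∀ A ∈ mgens K (I i) (ℓ - f i), mIdx A - A.card ≤ k) :
    betti K I f k ℓ =
      ∑ i, ((mgens K (I i) (ℓ - f i)).filter (fun A => mIdx A - A.card = k)).card := by
  refine Finset.sum_congr rfl fun i _ => ?_
  rw [Finset.card_filter]
  exact Finset.sum_congr rfl fun A hA => Nat.choose_eq_ite_of_le (hk i A hA)

end Betti

theorem stmt_9_general (K : Type*) [Field K] (n r : ℕ)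
    (I : Fin r → Ideal (MvPolynomial (Fin n) K)) (f : Fin r → ℕ)
    (hM : IsSqStableSubmodule K I f) (k ℓ : ℕ)
    (hext : IsExtremal (betti K I f) k ℓ) :
    betti K I f k ℓ = Set.ncard {p : Fin r × Finset (Fin n) |
      IsMinGen K (I p.1) p.2 ∧ p.2.card + f p.1 = ℓ ∧ mIdx p.2 + f p.1 = k + ℓ} := by
  rw [betti_eq_sum_card_filter fun i A hA => hext.sub_card_le hA,
    Set.ncard_setOf_prod_eq_sum (fun i A => IsMinGen K (I i) A ∧ A.card + f i = ℓ ∧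
      mIdx A + f i = k + ℓ)]
  refine Finset.sum_congr rfl fun i _ => congrArg Finset.card ?_
  ext A
  simp only [mgens, Finset.filter_filter, Finset.mem_filter, Finset.mem_univ, true_and, and_assoc]
  refine and_congr_right fun hA => ?_
  -- `ℓ - f i` truncates; properness makes `A` nonempty, which rules out `f i > ℓ`.
  have hpos : 0 < A.card := (hA.nonempty (hM.1 i).1).card_pos
  have hle := card_le_mIdx A
  omega

/-- if `β_{k,k+ℓ}(M)` is extremal then
`β_{k,k+ℓ}(M) = |{u e_i ∈ G(M)_ℓ : m(u) + f_i = k + ℓ}|`. -/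
theorem stmt_9 (K : Type*) [Field K] (n r : ℕ)
    (I : Fin r → Ideal (MvPolynomial (Fin n) K)) (f : Fin r → ℕ) (hf : Monotone f)
    (hM : IsSqStableSubmodule K I f) (k ℓ : ℕ)
    (hext : IsExtremal (betti K I f) k ℓ) :
    betti K I f k ℓ = Set.ncard {p : Fin r × Finset (Fin n) |
      IsMinGen K (I p.1) p.2 ∧ p.2.card + f p.1 = ℓ ∧ mIdx p.2 + f p.1 = k + ℓ} :=
  stmt_9_general K n r I f hM k ℓ hext
end

section
/- Let M ⊊ S^r be a squarefree stable submodule generated in a single degree d, and let m = max{m(u) : u e_i ∈ G(M)}. Then M has a unique extremal Betti number, namely β_{m-d, m}(M). -/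
open scoped Classical

/-! By the Aramova–Herzog–Hibi formula, `β_{k,k+j}(M) ≠ 0` forces `j = d` and `k ≤ m(u) - d` for
some generator `u`, so every nonzero entry `(k, j)` has `k ≤ m - d` and `j ≤ d`; the entry `(m - d, d)`
itself is nonzero because a generator with `m(u) = m` contributes `C(m - d, m - d) = 1`. -/

theorem isExtremal_unique_of_ne_zero_of_dominates {β : ℕ → ℕ → ℕ} {k ℓ : ℕ}
    (hne : β k ℓ ≠ 0) (hdom : ∀ i j, β i j ≠ 0 → i ≤ k ∧ j ≤ ℓ) :
    IsExtremal β k ℓ ∧ ∀ i j, IsExtremal β i j → (i, j) = (k, ℓ) := by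
  refine ⟨⟨hne, fun i j hi hj hij => ?_⟩, fun i j hext => ?_⟩
  · by_contra h
    obtain ⟨hik, hjℓ⟩ := hdom i j h
    exact hij (by rw [le_antisymm hik hi, le_antisymm hjℓ hj])
  · obtain ⟨hik, hjℓ⟩ := hdom i j hext.1
    by_contra hij
    exact hne (hext.2 k ℓ hik hjℓ (Ne.symm hij))

section Betti

variable {K : Type*} [Field K] {n r : ℕ} {I : Fin r → Ideal (MvPolynomial (Fin n) K)}

theorem betti_ne_zero_of_isMinGen (f : Fin r → ℕ) {i : Fin r} {A : Finset (Fin n)}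
    (hA : IsMinGen K (I i) A) : betti K I f (mIdx A - A.card) (A.card + f i) ≠ 0 := by
  have hmem : A ∈ mgens K (I i) (A.card + f i - f i) := by simp [mgens, hA]
  intro h
  have := (Finset.sum_eq_zero_iff.1 ((Finset.sum_eq_zero_iff.1 h) i (Finset.mem_univ i))) A hmem
  simp at this

theorem exists_isMinGen_of_betti_ne_zero {f : Fin r → ℕ} {k j : ℕ} (h : betti K I f k j ≠ 0) :
    ∃ i A, IsMinGen K (I i) A ∧ A.card = j - f i ∧ k ≤ mIdx A - A.card := by
  obtain ⟨i, -, hi⟩ := Finset.exists_ne_zero_of_sum_ne_zero h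
  obtain ⟨A, hA, hchoose⟩ := Finset.exists_ne_zero_of_sum_ne_zero hi
  simp only [mgens, Finset.mem_filter, Finset.mem_univ, true_and] at hA
  exact ⟨i, A, hA.1, hA.2, not_lt.1 (mt Nat.choose_eq_zero_of_lt hchoose)⟩

end Betti

theorem stmt_14_general (K : Type*) [Field K] (n r : ℕ)
    (I : Fin r → Ideal (MvPolynomial (Fin n) K))
    (d m : ℕ)
    (hgen : ∀ (i : Fin r) (A : Finset (Fin n)), IsMinGen K (I i) A → A.card = d)
    (hm : IsGreatest {v : ℕ | ∃ (i : Fin r) (A : Finset (Fin n)),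
      IsMinGen K (I i) A ∧ v = mIdx A} m) :
    IsExtremal (betti K I (fun _ => 0)) (m - d) d ∧
      ∀ k j : ℕ, IsExtremal (betti K I (fun _ => 0)) k j → (k, j) = (m - d, d) := by
  obtain ⟨⟨i, A, hA, rfl⟩, hmax⟩ := hm
  apply isExtremal_unique_of_ne_zero_of_dominates
  · simpa [hgen i A hA] using betti_ne_zero_of_isMinGen (fun _ => 0) hA
  · intro k j h
    obtain ⟨i', B, hB, hcard, hk⟩ := exists_isMinGen_of_betti_ne_zero h
    have hBm : mIdx B ≤ mIdx A := hmax ⟨i', B, hB, rfl⟩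
    have hBd := hgen i' B hB
    omega

/-- a squarefree stable submodule `M ⊊ S^r` generated in a single degree
`d` has a unique extremal Betti number, namely `β_{m-d,m}(M)` with
`m = max{m(u) : u e_i ∈ G(M)}`. -/
theorem stmt_14 (K : Type*) [Field K] (n r : ℕ)
    (I : Fin r → Ideal (MvPolynomial (Fin n) K))
    (hM : IsSqStableSubmodule K I (fun _ => 0)) (d m : ℕ)
    (hgen : ∀ (i : Fin r) (A : Finset (Fin n)), IsMinGen K (I i) A → A.card = d)
    (hm : IsGreatest {v : ℕ | ∃ (i : Fin r) (A : Finset (Fin n)),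
      IsMinGen K (I i) A ∧ v = mIdx A} m) :
    IsExtremal (betti K I (fun _ => 0)) (m - d) d ∧
      ∀ k j : ℕ, IsExtremal (betti K I (fun _ => 0)) k j → (k, j) = (m - d, d) :=
  stmt_14_general K n r I d m hgen hm
end

section
/- Let n ≥ 3 and let X be a non-empty subset of {0,1,...,n-1}. For every integer r ≥ |X| there exists a squarefree lexicographic submodule L ⊊ S^r (all basis degrees 0) such that supp(b(L)) = X, where b(L) = (b_0,...,b_{n-1}) with b_i = |{u e_j ∈ G(L)_{n-i} : m(u) = n}|. -/
open scoped Classical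

/-!
Take `I_j = [x_1,…,x_n]^{n - a_j}`, where `a_1 ≥ a_2 ≥ ⋯ ≥ a_r` runs through `X` (the smallest
element repeated as often as needed). The minimal generators of `I_j` are all squarefree
monomials of degree `n - a_j`, among them one with `m(u) = n`, namely `x_{a_j+1} ⋯ x_n`;
so `b_i ≠ 0` exactly when `i = a_j` for some `j`. The lex condition holds because
`indeg I_{j+1} = n - a_{j+1} ≥ n - a_j` and squarefree powers decrease with the exponent.
-/

theorem exists_antitone_range_eq {α : Type*} [LinearOrder α] (X : Finset α) (hX : X.Nonempty)
    {r : ℕ} (hr : X.card ≤ r) : ∃ f : Fin r → α, Antitone f ∧ Set.range f = X := by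
  set k := X.card
  have hk : 0 < k := hX.card_pos
  let e := X.orderEmbOfFin (rfl : X.card = k)
  refine ⟨fun j => e ⟨k - 1 - min j.1 (k - 1), by omega⟩, fun j j' hjj' => ?_, ?_⟩
  · exact e.monotone (Fin.mk_le_mk.mpr (by have : j.1 ≤ j'.1 := hjj'; omega))
  · apply subset_antisymm
    · rintro _ ⟨j, rfl⟩
      exact X.orderEmbOfFin_mem rfl _
    · intro x hx
      rw [← X.range_orderEmbOfFin rfl] at hx
      obtain ⟨m, rfl⟩ := hx
      refine ⟨⟨k - 1 - m, by omega⟩, congrArg e (Fin.ext ?_)⟩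
      have := m.isLt
      simp only
      omega

open MvPolynomial

section SquarefreePowers

variable {K : Type*} [Field K] {n : ℕ}

theorem sqMon_eq_monomial (A : Finset (Fin n)) :
    sqMon K A = monomial (Finsupp.indicator A fun _ _ => 1) 1 := by
  simpa [sqMon] using prod_X_pow (R := K) (fun _ => 1) A

theorem indicator_one_le_indicator_one_iff {ι : Type*} {A B : Finset ι} :
    (Finsupp.indicator A fun _ _ => (1 : ℕ)) ≤ Finsupp.indicator B (fun _ _ => 1) ↔
      A ⊆ B := by
  simp only [Finsupp.le_def, Finsupp.indicator_apply]
  refine ⟨fun h a ha => ?_, fun h a => ?_⟩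
  · by_contra haB
    simpa [ha, haB] using h a
  · by_cases ha : a ∈ A
    · simp [ha, h ha]
    · simp [ha]

theorem sqPow_eq_span_monomial (d : ℕ) :
    sqPow K n d = Ideal.span ((fun e => monomial e (1 : K)) ''
      ((fun B : Finset (Fin n) => Finsupp.indicator B fun _ _ => 1) '' {B | B.card = d})) := by
  rw [sqPow, Set.image_image]
  congr 1
  ext p
  simp [sqMon_eq_monomial, eq_comm]

theorem sqMon_mem_sqPow_iff {A : Finset (Fin n)} {d : ℕ} :
    sqMon K A ∈ sqPow K n d ↔ d ≤ A.card := by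
  rw [sqPow_eq_span_monomial, mem_ideal_span_monomial_image, sqMon_eq_monomial,
    support_monomial, if_neg one_ne_zero]
  simp only [Finset.mem_singleton, forall_eq, Set.mem_image, Set.mem_ofPred_eq,
    exists_exists_and_eq_and, indicator_one_le_indicator_one_iff]
  constructor
  · rintro ⟨B, rfl, hBA⟩
    exact Finset.card_le_card hBA
  · intro hd
    obtain ⟨B, hBA, hB⟩ := Finset.exists_subset_card_eq hd
    exact ⟨B, hB, hBA⟩

theorem isMinGen_sqPow_iff {A : Finset (Fin n)} {d : ℕ} :
    IsMinGen K (sqPow K n d) A ↔ A.card = d := by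
  simp only [IsMinGen, sqMon_mem_sqPow_iff, not_le]
  constructor
  · rintro ⟨hdA, hmin⟩
    obtain ⟨B, hBA, hB⟩ := Finset.exists_subset_card_eq hdA
    obtain rfl | hBA := hBA.eq_or_ssubset
    · exact hB
    · exact absurd (hmin B hBA) (by omega)
  · rintro rfl
    exact ⟨le_rfl, fun B hB => Finset.card_lt_card hB⟩

theorem sqPow_ne_top {d : ℕ} (hd : 0 < d) : sqPow K n d ≠ ⊤ := by
  intro h
  have : sqMon K (∅ : Finset (Fin n)) ∈ sqPow K n d := h ▸ Submodule.mem_top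
  rw [sqMon_mem_sqPow_iff, Finset.card_empty] at this
  omega

theorem isSqLexIdeal_sqPow (d : ℕ) : IsSqLexIdeal K (sqPow K n d) := by
  refine ⟨⟨{A | A.card = d}, ?_⟩, fun A B hAB hA _ => ?_⟩
  · rw [sqPow]
    congr 1
    ext p
    simp [eq_comm]
  · rw [sqMon_mem_sqPow_iff] at hA ⊢
    omega

theorem indeg_sqPow {d : ℕ} (hd : d ≤ n) : indeg K (sqPow K n d) = d := by
  obtain ⟨B, -, hB⟩ := Finset.exists_subset_card_eq (s := Finset.univ)
    (by simpa using hd : d ≤ (Finset.univ : Finset (Fin n)).card)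
  refine le_antisymm (Nat.sInf_le ⟨B, hB, sqMon_mem_sqPow_iff.mpr hB.ge⟩)
    (le_csInf ⟨d, B, hB, sqMon_mem_sqPow_iff.mpr hB.ge⟩ ?_)
  rintro _ ⟨A, rfl, hA⟩
  exact sqMon_mem_sqPow_iff.mp hA

theorem sqPow_antitone : Antitone (sqPow K n) := by
  intro d d' h
  rw [sqPow, Ideal.span_le]
  rintro _ ⟨A, rfl, rfl⟩
  exact sqMon_mem_sqPow_iff.mpr h

theorem mIdx_Ici (i : Fin n) : mIdx (Finset.Ici i) = n := by
  have hn : n - 1 < n := by have := i.pos; omega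
  refine le_antisymm (Finset.sup_le fun k _ => k.isLt) ?_
  have := Finset.le_sup (f := fun k : Fin n => k.1 + 1)
    (Finset.mem_Ici.mpr (Fin.le_iff_val_le_val.mpr (by simp; omega) : i ≤ ⟨n - 1, hn⟩))
  show n ≤ (Finset.Ici i).sup fun k => k.1 + 1
  simp only at this
  omega

theorem ncard_isMinGen_sqPow_ne_zero_iff {r : ℕ} (d : Fin r → ℕ) {i : ℕ} (hi : i < n) :
    Set.ncard {p : Fin r × Finset (Fin n) |
        IsMinGen K (sqPow K n (d p.1)) p.2 ∧ p.2.card + i = n ∧ mIdx p.2 = n} ≠ 0 ↔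
      ∃ j, d j + i = n := by
  simp only [isMinGen_sqPow_iff]
  constructor
  · intro h
    obtain ⟨⟨j, A⟩, hA, hAi, -⟩ := Set.nonempty_of_ncard_ne_zero h
    exact ⟨j, hA ▸ hAi⟩
  · rintro ⟨j, hj⟩
    have hcard : (Finset.Ici (⟨i, hi⟩ : Fin n)).card = n - i := Fin.card_Ici _
    exact Set.ncard_ne_zero_of_mem (a := (j, Finset.Ici ⟨i, hi⟩))
      ⟨by simp only [hcard]; omega, by simp only [hcard]; omega, mIdx_Ici _⟩

end SquarefreePowers

theorem stmt_15_general (K : Type*) [Field K] (n : ℕ)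
    (X : Finset ℕ) (hX : X.Nonempty) (hXsub : X ⊆ Finset.range n)
    (r : ℕ) (hr : X.card ≤ r) :
    ∃ I : Fin r → Ideal (MvPolynomial (Fin n) K),
      IsSqLexSubmodule K I (fun _ => 0) ∧
      ∀ i ∈ Finset.range n,
        (Set.ncard {p : Fin r × Finset (Fin n) |
          IsMinGen K (I p.1) p.2 ∧ p.2.card + i = n ∧ mIdx p.2 = n} ≠ 0 ↔ i ∈ X) := by
  obtain ⟨x, hx_anti, hx_range⟩ := exists_antitone_range_eq X hX hr
  have hx_mem : ∀ j, x j ∈ X := fun j => by rw [← Finset.mem_coe, ← hx_range]; exact ⟨j, rfl⟩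
  have hx_lt : ∀ j, x j < n := fun j => Finset.mem_range.mp (hXsub (hx_mem j))
  refine ⟨fun j => sqPow K n (n - x j),
    ⟨fun j => ⟨isSqLexIdeal_sqPow _, sqPow_ne_top (Nat.sub_pos_of_lt (hx_lt j))⟩,
      fun j h => ?_⟩,
    fun i hi => ?_⟩
  · have hle : x ⟨j.1 + 1, h⟩ ≤ x j := hx_anti (Fin.mk_le_mk.mpr (Nat.le_succ _))
    dsimp only
    rw [indeg_sqPow (Nat.sub_le _ _), add_zero, Nat.sub_zero]
    exact sqPow_antitone (by omega)
  · refine (ncard_isMinGen_sqPow_ne_zero_iff (fun j => n - x j)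
      (Finset.mem_range.mp hi)).trans ?_
    rw [← Finset.mem_coe, ← hx_range]
    refine exists_congr fun j => ?_
    have := hx_lt j
    omega

/-- for `n ≥ 3`, any nonempty `X ⊆ {0,…,n-1}` and any `r ≥ |X|`, there is
a squarefree lexicographic submodule `L ⊊ S^r` with `supp(b(L)) = X`, where
`b_i = |{u e_j ∈ G(L)_{n-i} : m(u) = n}|`. -/
theorem stmt_15 (K : Type*) [Field K] (n : ℕ) (hn : 3 ≤ n)
    (X : Finset ℕ) (hX : X.Nonempty) (hXsub : X ⊆ Finset.range n)
    (r : ℕ) (hr : X.card ≤ r) :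
    ∃ I : Fin r → Ideal (MvPolynomial (Fin n) K),
      IsSqLexSubmodule K I (fun _ => 0) ∧
      ∀ i ∈ Finset.range n,
        (Set.ncard {p : Fin r × Finset (Fin n) |
          IsMinGen K (I p.1) p.2 ∧ p.2.card + i = n ∧ mIdx p.2 = n} ≠ 0 ↔ i ∈ X) :=
  stmt_15_general K n X hX hXsub r hr
end
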